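/- For every F-term P, every T-term Q, and every closed term X ∈ S_A: EqFSCL ⊢ P = P ∧❛ X and EqFSCL ⊢ Q = Q ∨❛ X. -/

import Mathlib

/-- Closed sequential propositional statements over `A`:
`P ::= a | T | F | ¬P | P ∧❛ P | P ∨❛ P`. -/
inductive STerm (A : Type) : Type
  | atom : A → STerm A
  | tt : STerm A
  | ff : STerm A
  | neg : STerm A → STerm A
  | and : STerm A → STerm A → STerm A
  | or : STerm A → STerm A → STerm A

/-- Derivability from the axiom set EqFSCL: the least congruence (w.r.t. `¬`, `∧❛`, `∨❛`)
on closed terms containing all closed substitution instances of the axioms (F1)-(F10). -/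
inductive EqFSCL {A : Type} : STerm A → STerm A → Prop
  | refl (P) : EqFSCL P P
  | symm {P Q} : EqFSCL P Q → EqFSCL Q P
  | trans {P Q R} : EqFSCL P Q → EqFSCL Q R → EqFSCL P R
  | neg_congr {P Q} : EqFSCL P Q → EqFSCL (.neg P) (.neg Q)
  | and_congr {P P' Q Q'} : EqFSCL P Q → EqFSCL P' Q' → EqFSCL (.and P P') (.and Q Q')
  | or_congr {P P' Q Q'} : EqFSCL P Q → EqFSCL P' Q' → EqFSCL (.or P P') (.or Q Q')
  | F1 : EqFSCL .ff (.neg .tt)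
  | F2 (x y) : EqFSCL (.or x y) (.neg (.and (.neg x) (.neg y)))
  | F3 (x) : EqFSCL (.neg (.neg x)) x
  | F4 (x) : EqFSCL (.and .tt x) x
  | F5 (x) : EqFSCL (.or x .ff) x
  | F6 (x) : EqFSCL (.and .ff x) .ff
  | F7 (x y z) : EqFSCL (.and (.and x y) z) (.and x (.and y z))
  | F8 (x) : EqFSCL (.and (.neg x) .ff) (.and x .ff)
  | F9 (x y) : EqFSCL (.or (.and x .ff) y) (.and (.or x .tt) y)
  | F10 (x y z) : EqFSCL (.or (.and x y) (.and z .ff))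
      (.and (.or x (.and z .ff)) (.or y (.and z .ff)))

/-- T-terms: `P^T ::= T | (a ∧❛ P^T) ∨❛ P^T`. -/
inductive IsTTerm {A : Type} : STerm A → Prop
  | tt : IsTTerm .tt
  | node (a : A) {P Q} : IsTTerm P → IsTTerm Q → IsTTerm (.or (.and (.atom a) P) Q)

/-- F-terms: `P^F ::= F | (a ∨❛ P^F) ∧❛ P^F`. -/
inductive IsFTerm {A : Type} : STerm A → Prop
  | ff : IsFTerm .ff
  | node (a : A) {P Q} : IsFTerm P → IsFTerm Q → IsFTerm (.and (.or (.atom a) P) Q)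

/-- ℓ-terms: `P^ℓ ::= (a ∧❛ P^T) ∨❛ P^F | (¬a ∧❛ P^T) ∨❛ P^F`. -/
inductive IsLTerm {A : Type} : STerm A → Prop
  | pos (a : A) {P Q} : IsTTerm P → IsFTerm Q → IsLTerm (.or (.and (.atom a) P) Q)
  | neg (a : A) {P Q} : IsTTerm P → IsFTerm Q → IsLTerm (.or (.and (.neg (.atom a)) P) Q)

mutual
/-- The category `P^c ::= P^ℓ | P^* ∧❛ P^d`. -/
inductive IsCTerm {A : Type} : STerm A → Prop
  | ell {P} : IsLTerm P → IsCTerm P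
  | and {P Q} : IsStarTerm P → IsDTerm Q → IsCTerm (.and P Q)

/-- The category `P^d ::= P^ℓ | P^* ∨❛ P^c`. -/
inductive IsDTerm {A : Type} : STerm A → Prop
  | ell {P} : IsLTerm P → IsDTerm P
  | or {P Q} : IsStarTerm P → IsCTerm Q → IsDTerm (.or P Q)

/-- *-terms: `P^* ::= P^c | P^d`. -/
inductive IsStarTerm {A : Type} : STerm A → Prop
  | c {P} : IsCTerm P → IsStarTerm P
  | d {P} : IsDTerm P → IsStarTerm P
end

/-!
An F-term is `F` at the end of its right spine, and `F ∧❛ X = F` by (F6); associativity (F7)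
carries `X` down the spine. Dually, a T-term ends in `T`, and `T ∨❛ X = T` together with
associativity of `∨❛` follow from their `∧❛` counterparts through the De Morgan law (F2).
-/

namespace EqFSCL

variable {A : Type}

theorem neg_ff : EqFSCL (A := A) (.neg .ff) .tt :=
  .trans (.neg_congr .F1) (.F3 _)

theorem neg_or (x y : STerm A) : EqFSCL (.neg (.or x y)) (.and (.neg x) (.neg y)) :=
  .trans (.neg_congr (.F2 x y)) (.F3 _)

theorem tt_or (x : STerm A) : EqFSCL (.or .tt x) .tt :=
  (F2 _ _).trans <| (neg_congr (and_congr (symm F1) (refl _))).trans <|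
    (neg_congr (F6 _)).trans neg_ff

theorem or_assoc (x y z : STerm A) : EqFSCL (.or (.or x y) z) (.or x (.or y z)) :=
  (F2 _ _).trans <| (neg_congr (and_congr (neg_or x y) (refl _))).trans <|
    (neg_congr (F7 _ _ _)).trans <| (neg_congr (and_congr (refl _) (neg_or y z).symm)).trans <|
      (F2 _ _).symm

end EqFSCL

theorem IsFTerm.eqFSCL_self_and {A : Type} {P : STerm A} (hP : IsFTerm P) (X : STerm A) :
    EqFSCL P (.and P X) := by
  induction hP with
  | ff => exact .symm (.F6 X)
  | node _ _ _ _ ih => exact .trans (.and_congr (.refl _) ih) (.symm (.F7 _ _ _))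

theorem IsTTerm.eqFSCL_self_or {A : Type} {Q : STerm A} (hQ : IsTTerm Q) (X : STerm A) :
    EqFSCL Q (.or Q X) := by
  induction hQ with
  | tt => exact .symm (.tt_or X)
  | node _ _ _ _ ih => exact .trans (.or_congr (.refl _) ih) (.symm (.or_assoc _ _ _))

/-- For every F-term `P`, T-term `Q` and closed term `X`:
`EqFSCL ⊢ P = P ∧❛ X` and `EqFSCL ⊢ Q = Q ∨❛ X`. -/
theorem fterm_and_tterm_or {A : Type} [Nonempty A] (P Q X : STerm A)
    (hP : IsFTerm P) (hQ : IsTTerm Q) :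
    EqFSCL P (.and P X) ∧ EqFSCL Q (.or Q X) :=
  ⟨hP.eqFSCL_self_and X, hQ.eqFSCL_self_or X⟩
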